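/- arXiv:2510.23864 — 4 statements merged into one kernel-verified Lean document; each statement's English description precedes it below -/
import Mathlib

section
/- Let Γ be a countable group acting by group automorphisms on a countable abelian group D, and let G = D ⋊ Γ denote the semidirect product. Then G is icc if and only if both of the following hold: (i) for every nontrivial n ∈ D, the orbit Γ·n = {g·n : g ∈ Γ} is infinite; and (ii) for every g ≠ e in Γ such that D_g is finite, the conjugacy class of g in Γ is infinite. -/
/-! Conjugates of `(d, 1)` are the `(h • d, 1)`; conjugating `(n, g)` by elements of `D` sweeps
out `(n · D_g, g)`, and the projection to `Γ` maps the class of `(n, g)` onto the class of `g`.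
This gives icc-ness under (i) and (ii). Conversely, the class of `(1, g)` lies in the union of the
`D_k × {k}` over the conjugates `k` of `g`, which is finite when the class of `g` and `D_g` are,
since `D_{hgh⁻¹} = h • D_g`. -/

/-- A group is icc if every conjugacy class other than that of the identity is infinite. -/
def IsIcc (G : Type*) [Group G] : Prop :=
  ∀ x : G, x ≠ 1 → {y : G | IsConj x y}.Infinite

namespace SemidirectProduct

variable {Γ D : Type*} [Group Γ] [CommGroup D] (φ : Γ →* MulAut D)

/-- The subgroup `D_g` of the paper, written multiplicatively. -/
def displacements (g : Γ) : Set D :=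
  Set.range fun d : D => φ g d * d⁻¹

lemma displacements_conj (c g : Γ) :
    displacements φ (c * g * c⁻¹) = φ c '' displacements φ g := by
  ext x
  constructor
  · rintro ⟨d, rfl⟩
    exact ⟨φ g (φ c⁻¹ d) * (φ c⁻¹ d)⁻¹, ⟨_, rfl⟩, by simp [map_mul]⟩
  · rintro ⟨_, ⟨d, rfl⟩, rfl⟩
    exact ⟨φ c d, by simp [map_mul]⟩

lemma mk_mul_mk_mul_inv (m n : D) (h g : Γ) :
    (⟨m, h⟩ : D ⋊[φ] Γ) * ⟨n, g⟩ * (⟨m, h⟩ : D ⋊[φ] Γ)⁻¹ =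
      ⟨m * φ h n * φ (h * g * h⁻¹) m⁻¹, h * g * h⁻¹⟩ := by
  ext <;> simp [mul_assoc, map_mul]

lemma conjugatesOf_inl (d : D) :
    conjugatesOf (inl d : D ⋊[φ] Γ) = inl '' Set.range fun h : Γ => φ h d := by
  ext y
  constructor
  · intro hy
    obtain ⟨⟨m, h⟩, rfl⟩ := isConj_iff.mp hy
    refine ⟨φ h d, ⟨h, rfl⟩, ?_⟩
    ext <;> simp [mul_comm]
  · rintro ⟨_, ⟨h, rfl⟩, rfl⟩
    exact isConj_iff.mpr ⟨inr h, by rw [← map_inv, inl_aut]⟩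

lemma image_right_conjugatesOf (x : D ⋊[φ] Γ) :
    right '' conjugatesOf x = conjugatesOf x.right := by
  ext k
  constructor
  · rintro ⟨y, hy, rfl⟩
    exact (rightHom : D ⋊[φ] Γ →* Γ).map_isConj hy
  · intro hk
    obtain ⟨c, rfl⟩ := isConj_iff.mp hk
    exact ⟨inr c * x * (inr c)⁻¹, isConj_iff.mpr ⟨_, rfl⟩, by simp⟩

lemma image_mk_mul_displacements_subset (n : D) (g : Γ) :
    (fun a => (⟨n * a, g⟩ : D ⋊[φ] Γ)) '' displacements φ g ⊆ conjugatesOf ⟨n, g⟩ := by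
  rintro _ ⟨_, ⟨m, rfl⟩, rfl⟩
  refine isConj_iff.mpr ⟨⟨m⁻¹, 1⟩, ?_⟩
  rw [mk_mul_mk_mul_inv]
  congr 1 <;> simp [mul_comm, mul_assoc]

lemma conjugatesOf_inr_subset (g : Γ) :
    conjugatesOf (inr g : D ⋊[φ] Γ) ⊆
      ⋃ k ∈ conjugatesOf g, (fun a => (⟨a, k⟩ : D ⋊[φ] Γ)) '' displacements φ k := by
  intro y hy
  obtain ⟨⟨m, h⟩, rfl⟩ := isConj_iff.mp hy
  rw [Set.mem_iUnion₂]
  refine ⟨h * g * h⁻¹, isConj_iff.mpr ⟨h, rfl⟩, φ (h * g * h⁻¹) m⁻¹ * m⁻¹⁻¹, ⟨_, rfl⟩, ?_⟩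
  ext <;> simp [mul_comm]

lemma conjugatesOf_inr_finite {g : Γ} (hC : (conjugatesOf g).Finite)
    (hD : (displacements φ g).Finite) : (conjugatesOf (inr g : D ⋊[φ] Γ)).Finite := by
  refine (hC.biUnion fun k hk => ?_).subset (conjugatesOf_inr_subset φ g)
  obtain ⟨c, rfl⟩ := isConj_iff.mp hk
  rw [displacements_conj]
  exact (hD.image _).image _

end SemidirectProduct

open SemidirectProduct

theorem stmt_2_general {Γ D : Type*} [Group Γ] [CommGroup D]
    (φ : Γ →* MulAut D) :
    IsIcc (D ⋊[φ] Γ) ↔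
      ((∀ d : D, d ≠ 1 → (Set.range fun g : Γ => φ g d).Infinite) ∧
        (∀ g : Γ, g ≠ 1 →
          (Set.range fun d : D => φ g d * d⁻¹).Finite → {h : Γ | IsConj g h}.Infinite)) := by
  constructor
  · intro hicc
    refine ⟨fun d hd => ?_, fun g hg hD => ?_⟩
    · have hinf := hicc (inl d) ((map_ne_one_iff _ inl_injective).mpr hd)
      rw [← conjugatesOf, conjugatesOf_inl] at hinf
      exact hinf.of_image _
    · by_contra hC
      exact hicc (inr g) ((map_ne_one_iff _ inr_injective).mpr hg)
        (conjugatesOf_inr_finite φ (Set.not_infinite.mp hC) hD)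
  · rintro ⟨horbit, hdisp⟩ ⟨n, g⟩ hx
    by_cases hg : g = 1
    · subst hg
      have hn : n ≠ 1 := fun hn => hx (by ext <;> simp [hn])
      have hinf := (horbit n hn).image (inl_injective (φ := φ)).injOn
      rwa [← conjugatesOf_inl] at hinf
    by_cases hC : (conjugatesOf g).Infinite
    · exact Set.Infinite.of_image right (image_right_conjugatesOf φ ⟨n, g⟩ ▸ hC)
    · have hD : (displacements φ g).Infinite := fun hD => hC (hdisp g hg hD)
      have hinj : Function.Injective fun a => (⟨n * a, g⟩ : D ⋊[φ] Γ) :=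
        fun a b hab => mul_left_cancel (congrArg left hab)
      exact (hD.image hinj.injOn).mono (image_mk_mul_displacements_subset φ n g)

theorem stmt_2 {Γ D : Type*} [Group Γ] [Countable Γ] [CommGroup D] [Countable D]
    (φ : Γ →* MulAut D) :
    IsIcc (D ⋊[φ] Γ) ↔
      ((∀ d : D, d ≠ 1 → (Set.range fun g : Γ => φ g d).Infinite) ∧
        (∀ g : Γ, g ≠ 1 →
          (Set.range fun d : D => φ g d * d⁻¹).Finite → {h : Γ | IsConj g h}.Infinite)) :=
  stmt_2_general φ
end

section
/- Let n ≥ 1 and let Γ ≤ GL(n,ℤ) be a subgroup containing a nontrivial element g none of whose complex eigenvalues is a root of unity, acting on ℤⁿ by matrix multiplication. Then: every nontrivial Γ-orbit in ℤⁿ is infinite; for every h ≠ I in Γ the subgroup D_h = {h·m − m : m ∈ ℤⁿ} = Im(h − I) is infinite; and consequently the semidirect product ℤⁿ ⋊ Γ is an icc group. -/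
/-! If `g ^ k *ᵥ v = v` with `k > 0` and `v ≠ 0`, then `1` is an eigenvalue of `g ^ k`, so some
eigenvalue of `g` is a `k`-th root of unity. Hence the powers of `g` already move every nonzero
vector to infinitely many places. For `h ≠ 1`, `D_h = Im(h - 1)` is a nonzero subgroup of the
torsion-free group `ℤⁿ`, hence infinite. In `ℤⁿ ⋊ Γ`, conjugating `(v, 1)` by `Γ` sweeps out the
`Γ`-orbit of `v`, and conjugating `(v, h)` by `ℤⁿ` sweeps out `(v + D_h, h)`. -/


/-- The additive automorphism of `ℤⁿ` given by an element of `GL(n, ℤ)`. -/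
def glAddAut (n : ℕ) : Matrix.GeneralLinearGroup (Fin n) ℤ →* Multiplicative (AddAut (Fin n → ℤ)) where
  toFun A := Multiplicative.ofAdd
    { toFun := fun v => (A : Matrix (Fin n) (Fin n) ℤ).mulVec v
      invFun := fun v => ((A⁻¹ : Matrix.GeneralLinearGroup (Fin n) ℤ) : Matrix (Fin n) (Fin n) ℤ).mulVec v
      left_inv := fun v => by
        show ((A⁻¹ : Matrix.GeneralLinearGroup (Fin n) ℤ) : Matrix (Fin n) (Fin n) ℤ).mulVec
          ((A : Matrix (Fin n) (Fin n) ℤ).mulVec v) = v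
        rw [Matrix.mulVec_mulVec, show ((A⁻¹ : Matrix.GeneralLinearGroup (Fin n) ℤ) : Matrix (Fin n) (Fin n) ℤ) *
            (A : Matrix (Fin n) (Fin n) ℤ) = 1 from A.inv_mul]
        exact Matrix.one_mulVec v
      right_inv := fun v => by
        show (A : Matrix (Fin n) (Fin n) ℤ).mulVec
          (((A⁻¹ : Matrix.GeneralLinearGroup (Fin n) ℤ) : Matrix (Fin n) (Fin n) ℤ).mulVec v) = v
        rw [Matrix.mulVec_mulVec, show (A : Matrix (Fin n) (Fin n) ℤ) *
            ((A⁻¹ : Matrix.GeneralLinearGroup (Fin n) ℤ) : Matrix (Fin n) (Fin n) ℤ) = 1 from A.mul_inv]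
        exact Matrix.one_mulVec v
      map_add' := fun v w => Matrix.mulVec_add _ v w }
  map_one' := by
    apply Multiplicative.toAdd.injective
    ext v
    simp [Matrix.one_mulVec]
  map_mul' := fun A B => by
    apply Multiplicative.toAdd.injective
    ext v
    simp [Matrix.mulVec_mulVec]

/-- The action of a subgroup of `GL(n, ℤ)` on `Multiplicative (ℤⁿ)` by automorphisms,
    giving rise to the semidirect product `ℤⁿ ⋊ Γ`. -/
def glMulAut (n : ℕ) (Γ : Subgroup (Matrix.GeneralLinearGroup (Fin n) ℤ)) :
    Γ →* MulAut (Multiplicative (Fin n → ℤ)) :=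
  MonoidHom.mk' (fun A => AddEquiv.toMultiplicative (Multiplicative.toAdd (glAddAut n (A : Matrix.GeneralLinearGroup (Fin n) ℤ))))
    (by
      intro A B
      ext v
      simp [glAddAut, Matrix.mulVec_mulVec])

open Matrix

section Eigenvalues

variable {m : Type*} [Fintype m] [DecidableEq m]

theorem Matrix.exists_isRoot_charpoly_pow_eq_one {K : Type*} [Field K] [IsAlgClosed K]
    {M : Matrix m m K} {v : m → K} (hv : v ≠ 0) {k : ℕ} (hk : 0 < k) (hfix : M ^ k *ᵥ v = v) :
    ∃ z, M.charpoly.IsRoot z ∧ z ^ k = 1 := by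
  have hone : (1 : K) ∈ spectrum K (M ^ k) := by
    rw [spectrum.mem_iff, Algebra.algebraMap_eq_smul_one, one_smul]
    intro hunit
    refine hv (mulVec_injective_of_isUnit hunit ?_)
    rw [sub_mulVec, one_mulVec, hfix, sub_self, mulVec_zero]
  rw [spectrum.map_pow_of_pos M hk] at hone
  obtain ⟨z, hz, hzk⟩ := hone
  exact ⟨z, mem_spectrum_iff_isRoot_charpoly.mp hz, hzk⟩

theorem Matrix.pow_mulVec_ne_self_of_charpoly_roots {R K : Type*} [CommRing R] [Field K]
    [IsAlgClosed K] (f : R →+* K) (hf : Function.Injective f) {A : Matrix m m R}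
    (hroots : ∀ z : K, (A.map f).charpoly.IsRoot z → ∀ k : ℕ, 0 < k → z ^ k ≠ 1)
    {v : m → R} (hv : v ≠ 0) {k : ℕ} (hk : 0 < k) : A ^ k *ᵥ v ≠ v := by
  intro hfix
  have hfv : f ∘ v ≠ 0 := fun h0 => hv (funext fun i => hf (by simpa using congrFun h0 i))
  have hfix' : A.map f ^ k *ᵥ (f ∘ v) = f ∘ v := by
    ext i
    rw [← RingHom.mapMatrix_apply, ← map_pow, RingHom.mapMatrix_apply, ← RingHom.map_mulVec, hfix,
      Function.comp_apply]
  obtain ⟨z, hz, hzk⟩ := exists_isRoot_charpoly_pow_eq_one hfv hk hfix'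
  exact hroots z hz k hk hzk

end Eigenvalues

section Orbits

variable {m R : Type*} [Fintype m] [DecidableEq m] [CommRing R]

theorem Matrix.pow_mulVec_injective {A : Matrix m m R} (hA : IsUnit A) {v : m → R}
    (hv : ∀ k : ℕ, 0 < k → A ^ k *ᵥ v ≠ v) : Function.Injective fun k : ℕ => A ^ k *ᵥ v := by
  refine Function.Injective.of_lt_imp_ne fun a b hab heq => hv (b - a) (by omega) ?_
  apply mulVec_injective_of_isUnit (hA.pow a)
  rw [mulVec_mulVec, ← pow_add, Nat.add_sub_cancel' hab.le]
  exact heq.symm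

theorem Matrix.GeneralLinearGroup.infinite_range_mulVec {Γ : Subgroup (GL m R)} (g : Γ)
    {v : m → R} (hv : ∀ k : ℕ, 0 < k → ((g : GL m R) : Matrix m m R) ^ k *ᵥ v ≠ v) :
    (Set.range fun A : Γ => ((A : GL m R) : Matrix m m R) *ᵥ v).Infinite :=
  Set.infinite_of_injective_forall_mem (pow_mulVec_injective (g : GL m R).isUnit hv)
    fun k => ⟨g ^ k, by simp⟩

end Orbits

theorem AddMonoidHom.infinite_range {M N : Type*} [AddGroup M] [AddCommGroup N]
    [IsAddTorsionFree N] {f : M →+ N} (hf : f ≠ 0) : (Set.range f).Infinite := by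
  obtain ⟨x, hx⟩ := DFunLike.ne_iff.mp hf
  exact Set.infinite_of_injective_forall_mem (smul_left_injective ℤ hx)
    fun k => ⟨k • x, map_zsmul f k x⟩

theorem Matrix.infinite_range_mulVec_sub_self {m R : Type*} [Fintype m] [DecidableEq m] [Ring R]
    [IsAddTorsionFree R] {A : Matrix m m R} (hA : A ≠ 1) :
    (Set.range fun v : m → R => A *ᵥ v - v).Infinite := by
  let f : (m → R) →+ (m → R) := AddMonoidHom.mk' (fun v => A *ᵥ v - v) fun v w => by
    rw [mulVec_add]; abel
  have hf : f ≠ 0 := fun h0 => hA <| mulVec_injective <| funext fun v => by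
    simpa [f, sub_eq_zero] using DFunLike.congr_fun h0 v
  exact AddMonoidHom.infinite_range hf

namespace SemidirectProduct

variable {N G : Type*} [CommGroup N] [Group G] {φ : G →* MulAut N}

theorem isConj_inl_aut (g : G) (x : N) : IsConj (inl x : N ⋊[φ] G) (inl (φ g x)) :=
  isConj_iff.mpr ⟨inr g, by rw [← map_inv, inl_aut]⟩

theorem isConj_inl_div_mul (x : N ⋊[φ] G) (m : N) :
    IsConj x (inl (φ x.right m / m) * x) := by
  refine isConj_iff.mpr ⟨inl m⁻¹, SemidirectProduct.ext ?_ ?_⟩ <;>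
    simp [div_eq_mul_inv, mul_assoc, mul_comm, mul_left_comm]

theorem isIcc_of_infinite_orbit
    (horbit : ∀ x : N, x ≠ 1 → (Set.range fun g : G => φ g x).Infinite)
    (hdiv : ∀ g : G, g ≠ 1 → (Set.range fun m : N => φ g m / m).Infinite) :
    IsIcc (N ⋊[φ] G) := by
  intro x hx
  by_cases hright : x.right = 1
  · have hx_eq : x = inl x.left := SemidirectProduct.ext rfl (by simp [hright])
    have hleft : x.left ≠ 1 := fun h => hx (by rw [hx_eq, h, map_one])
    rw [hx_eq]
    refine ((horbit _ hleft).image inl_injective.injOn).mono ?_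
    rintro _ ⟨_, ⟨g, rfl⟩, rfl⟩
    exact isConj_inl_aut g x.left
  · refine ((hdiv _ hright).image ((mul_left_injective x).comp inl_injective).injOn).mono ?_
    rintro _ ⟨_, ⟨m, rfl⟩, rfl⟩
    exact isConj_inl_div_mul x m

end SemidirectProduct

section GLSemidirect

variable {n : ℕ} {Γ : Subgroup (GL (Fin n) ℤ)}

theorem range_glMulAut_apply (x : Multiplicative (Fin n → ℤ)) :
    Set.range (fun A : Γ => glMulAut n Γ A x) =
      Multiplicative.ofAdd ''
        Set.range fun A : Γ => ((A : GL (Fin n) ℤ) : Matrix (Fin n) (Fin n) ℤ) *ᵥ x.toAdd := by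
  rw [← Set.range_comp]
  rfl

theorem range_glMulAut_div (A : Γ) :
    Set.range (fun m => glMulAut n Γ A m / m) =
      Multiplicative.ofAdd ''
        Set.range fun m => ((A : GL (Fin n) ℤ) : Matrix (Fin n) (Fin n) ℤ) *ᵥ m - m := by
  rw [← Set.range_comp, ← Multiplicative.toAdd.surjective.range_comp]
  rfl

end GLSemidirect

theorem stmt_3_general (n : ℕ) (Γ : Subgroup (Matrix.GeneralLinearGroup (Fin n) ℤ))
    (g : Γ)
    (heig : ∀ z : ℂ,
      (((g : Matrix.GeneralLinearGroup (Fin n) ℤ) : Matrix (Fin n) (Fin n) ℤ).map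
          (Int.cast : ℤ → ℂ)).charpoly.IsRoot z → ∀ k : ℕ, 0 < k → z ^ k ≠ 1) :
    (∀ v : Fin n → ℤ, v ≠ 0 →
        (Set.range fun A : Γ =>
          ((A : Matrix.GeneralLinearGroup (Fin n) ℤ) : Matrix (Fin n) (Fin n) ℤ).mulVec v).Infinite)
      ∧ (∀ h : Γ, h ≠ 1 →
          (Set.range fun m : Fin n → ℤ =>
            ((h : Matrix.GeneralLinearGroup (Fin n) ℤ) : Matrix (Fin n) (Fin n) ℤ).mulVec m - m).Infinite)
      ∧ IsIcc (Multiplicative (Fin n → ℤ) ⋊[glMulAut n Γ] Γ) := by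
  have horbit : ∀ v : Fin n → ℤ, v ≠ 0 →
      (Set.range fun A : Γ => ((A : GL (Fin n) ℤ) : Matrix (Fin n) (Fin n) ℤ) *ᵥ v).Infinite :=
    fun v hv => GeneralLinearGroup.infinite_range_mulVec g fun _ hk =>
      pow_mulVec_ne_self_of_charpoly_roots (Int.castRingHom ℂ) Int.cast_injective heig hv hk
  have hdiff : ∀ h : Γ, h ≠ 1 →
      (Set.range fun m => ((h : GL (Fin n) ℤ) : Matrix (Fin n) (Fin n) ℤ) *ᵥ m - m).Infinite :=
    fun h hh => infinite_range_mulVec_sub_self fun h1 => hh (Subtype.ext (Units.ext h1))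
  refine ⟨horbit, hdiff, SemidirectProduct.isIcc_of_infinite_orbit (fun x hx => ?_) fun h hh => ?_⟩
  · rw [range_glMulAut_apply]
    exact (horbit _ hx).image Multiplicative.ofAdd.injective.injOn
  · rw [range_glMulAut_div]
    exact (hdiff h hh).image Multiplicative.ofAdd.injective.injOn

theorem stmt_3 (n : ℕ) (hn : 1 ≤ n) (Γ : Subgroup (Matrix.GeneralLinearGroup (Fin n) ℤ))
    (g : Γ) (hg : g ≠ 1)
    (heig : ∀ z : ℂ,
      (((g : Matrix.GeneralLinearGroup (Fin n) ℤ) : Matrix (Fin n) (Fin n) ℤ).map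
          (Int.cast : ℤ → ℂ)).charpoly.IsRoot z → ∀ k : ℕ, 0 < k → z ^ k ≠ 1) :
    (∀ v : Fin n → ℤ, v ≠ 0 →
        (Set.range fun A : Γ =>
          ((A : Matrix.GeneralLinearGroup (Fin n) ℤ) : Matrix (Fin n) (Fin n) ℤ).mulVec v).Infinite)
      ∧ (∀ h : Γ, h ≠ 1 →
          (Set.range fun m : Fin n → ℤ =>
            ((h : Matrix.GeneralLinearGroup (Fin n) ℤ) : Matrix (Fin n) (Fin n) ℤ).mulVec m - m).Infinite)
      ∧ IsIcc (Multiplicative (Fin n → ℤ) ⋊[glMulAut n Γ] Γ) :=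
  stmt_3_general n Γ g heig
end

section
/- Let Γ be a countable group, let α : Γ → GL(n,ℝ) be an injective homomorphism such that the diagonal linear action of Γ on ℝⁿ × ℝⁿ, g·(x,y) = (α(g)x, α(g)y), is ergodic with respect to the product of Lebesgue measures (i.e., the linear action of Γ on ℝⁿ is doubly ergodic), and let β be an action of Γ by continuous group automorphisms on a compact second-countable abelian group K that is ergodic with respect to the normalized Haar probability measure on K. Then the diagonal action of Γ on ℝⁿ × K, g·(x,k) = (α(g)x, β_g(k)), is ergodic and essentially free with respect to the product of Lebesgue measure and Haar measure. -/
open MeasureTheory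

/-- A (not necessarily measure-preserving) action of `Γ` on a measure space is ergodic if
every invariant measurable set is null or conull. -/
def IsErgodicAction {Γ X : Type*} [MeasurableSpace X] (μ : Measure X)
    (act : Γ → X → X) : Prop :=
  ∀ E : Set X, MeasurableSet E → (∀ g : Γ, act g '' E = E) → μ E = 0 ∨ μ Eᶜ = 0

/-! Let `E ⊆ ℝⁿ × K` be invariant with sections `E_x ⊆ K`. Then `E_{g x} = β_g E_x`, and since `β`
preserves Haar measure, `D(x, y) = μ(E_x ∆ E_y)` is invariant under the diagonal action on
`ℝⁿ × ℝⁿ`. By double ergodicity every sublevel set `{D ≤ c}` is null or conull, and separability of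
the measure algebra of `K` shows it is not null for `c > 0`, so `D = 0` a.e. Hence almost every
section agrees a.e. with a single set `B`, which is almost invariant under `β` and thus, `Γ` being
countable, null or conull by ergodicity of `β`; so is `E`.

For `g ≠ 1` the fixed points of `α g` form a proper subspace of `ℝⁿ`, a Lebesgue null set. -/

open Set Filter
open scoped Pointwise ENNReal symmDiff

section Ergodic

variable {Γ Y : Type*} [Group Γ] [MulAction Γ Y] [MeasurableSpace Y] {m : Measure Y}

lemma isErgodicAction_smul_iff :
    IsErgodicAction m (fun (g : Γ) y => g • y) ↔ ∀ E, MeasurableSet E →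
      (∀ (g : Γ) y, g • y ∈ E ↔ y ∈ E) → m E = 0 ∨ m Eᶜ = 0 := by
  have key : ∀ E : Set Y,
      (∀ g : Γ, (fun y => g • y) '' E = E) ↔ ∀ (g : Γ) y, g • y ∈ E ↔ y ∈ E := by
    intro E
    simp only [image_smul]
    refine ⟨fun h g y => ?_, fun h g => ?_⟩
    · conv_lhs => rw [← h g]
      exact smul_mem_smul_set_iff
    · ext y
      rw [mem_smul_set_iff_inv_smul_mem, h]
  simp only [IsErgodicAction, key]

lemma IsErgodicAction.ae_eq_zero_of_smul_invariant
    (h : IsErgodicAction m (fun (g : Γ) y => g • y)) {f : Y → ℝ≥0∞} (hf : Measurable f)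
    (hinv : ∀ (g : Γ) y, f (g • y) = f y) (hpos : ∀ c ≠ 0, m {y | f y ≤ c} ≠ 0) :
    f =ᵐ[m] 0 := by
  have hle : ∀ k : ℕ, ∀ᵐ y ∂m, f y ≤ (k : ℝ≥0∞)⁻¹ := by
    intro k
    have hc : (k : ℝ≥0∞)⁻¹ ≠ 0 := ENNReal.inv_ne_zero.2 (ENNReal.natCast_ne_top k)
    rcases isErgodicAction_smul_iff.1 h _ (hf measurableSet_Iic) (fun g y => by simp [hinv])
      with h0 | h1
    · exact absurd h0 (hpos _ hc)
    · exact measure_eq_zero_iff_ae_notMem.1 h1 |>.mono fun y hy => by simpa using hy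
  filter_upwards [ae_all_iff.2 hle] with y hy
  by_contra hne
  obtain ⟨k, hk⟩ := ENNReal.exists_inv_nat_lt hne
  exact (hy k).not_gt hk

theorem ErgodicSMul.of_isErgodicAction [Countable Γ] [MeasurableConstSMul Γ Y]
    [SMulInvariantMeasure Γ Y m] (h : IsErgodicAction m (fun (g : Γ) y => g • y)) :
    ErgodicSMul Γ Y m where
  aeconst_of_forall_preimage_smul_ae_eq {s} hs hinv := by
    set t := ⋂ g : Γ, (g • ·) ⁻¹' s
    have hts : t =ᵐ[m] s := by
      simpa only [iInter_const] using Filter.EventuallyEq.countable_iInter hinv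
    have ht : MeasurableSet t :=
      MeasurableSet.iInter fun g => hs.preimage (measurable_const_smul g)
    have htinv : ∀ (g : Γ) y, g • y ∈ t ↔ y ∈ t := by
      intro g y
      simp only [t, mem_iInter, mem_preimage, smul_smul]
      exact (Equiv.mulRight g).forall_congr_right (q := fun h => h • y ∈ s)
    refine (eventuallyConst_set'.2 ?_).congr hts
    rw [ae_eq_empty, ae_eq_univ]
    exact isErgodicAction_smul_iff.1 h t ht htinv

end Ergodic

lemma preimage_prodMk_smul {Γ X K : Type*} [Group Γ] [MulAction Γ X] [MulAction Γ K]
    {E : Set (X × K)} (hE : ∀ (g : Γ) p, g • p ∈ E ↔ p ∈ E) (g : Γ) (x : X) :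
    Prod.mk (g • x) ⁻¹' E = g • Prod.mk x ⁻¹' E := by
  ext k
  rw [mem_smul_set_iff_inv_smul_mem, mem_preimage, mem_preimage, ← hE g⁻¹, Prod.smul_mk,
    inv_smul_smul]

section Sections

variable {X K : Type*} [MeasurableSpace X] [MeasurableSpace K] {μ : Measure K}

lemma exists_measure_ne_zero_forall_measure_symmDiff_lt (ν : Measure X) [NeZero ν]
    [IsFiniteMeasure μ] [IsSeparable μ] {s : X → Set K} (hs : ∀ x, MeasurableSet (s x))
    {c : ℝ≥0∞} (hc : c ≠ 0) :
    ∃ A : Set X, ν A ≠ 0 ∧ ∀ x ∈ A, ∀ y ∈ A, μ (s x ∆ s y) < c := by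
  obtain ⟨r, -, hr0, hrc⟩ := ENNReal.lt_iff_exists_real_btwn.1 (ENNReal.half_pos hc)
  obtain ⟨𝒜, h𝒜, h𝒜dense⟩ := exists_countable_measureDense μ
  have hcover : univ ⊆ ⋃ t ∈ 𝒜, {x | μ (s x ∆ t) < ENNReal.ofReal r} := fun x _ => by
    obtain ⟨t, ht, hxt⟩ := h𝒜dense.approx (s x) (hs x) (measure_ne_top μ _) r
      (ENNReal.ofReal_pos.1 hr0)
    exact mem_biUnion ht hxt
  obtain ⟨t, -, ht⟩ : ∃ t ∈ 𝒜, ν {x | μ (s x ∆ t) < ENNReal.ofReal r} ≠ 0 := by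
    by_contra! hnull
    exact NeZero.ne ν (Measure.measure_univ_eq_zero.1
      (measure_mono_null hcover ((measure_biUnion_null_iff h𝒜).2 hnull)))
  refine ⟨_, ht, fun x hx y hy => ?_⟩
  calc μ (s x ∆ s y) ≤ μ (s x ∆ t) + μ (t ∆ s y) := measure_symmDiff_le _ _ _
    _ < c / 2 + c / 2 := by
      rw [symmDiff_comm t]
      exact ENNReal.add_lt_add (hx.trans hrc) (hy.trans hrc)
    _ = c := ENNReal.add_halves c

lemma measurable_measure_symmDiff_preimage_prodMk [SFinite μ] {E : Set (X × K)}
    (hE : MeasurableSet E) :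
    Measurable fun p : X × X => μ ((Prod.mk p.1 ⁻¹' E) ∆ (Prod.mk p.2 ⁻¹' E)) := by
  have hF : MeasurableSet (((fun q : (X × X) × K => (q.1.1, q.2)) ⁻¹' E) ∆
      ((fun q : (X × X) × K => (q.1.2, q.2)) ⁻¹' E)) :=
    (hE.preimage (by fun_prop)).symmDiff (hE.preimage (by fun_prop))
  exact measurable_measure_prodMk_left hF

lemma ae_eq_univ_prod_of_ae_preimage_prodMk_ae_eq {ν : Measure X} [SFinite μ] {E : Set (X × K)}
    {B : Set K} (hE : MeasurableSet E) (hB : MeasurableSet B)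
    (h : ∀ᵐ x ∂ν, Prod.mk x ⁻¹' E =ᵐ[μ] B) : E =ᵐ[ν.prod μ] univ ×ˢ B := by
  rw [← measure_symmDiff_eq_zero_iff,
    Measure.measure_prod_null (hE.symmDiff (MeasurableSet.univ.prod hB))]
  filter_upwards [h] with x hx
  rw [preimage_symmDiff, mk_preimage_prod_right (mem_univ x)]
  exact measure_symmDiff_eq_zero_iff.2 hx

end Sections

theorem isErgodicAction_prod_of_doubly_ergodic {Γ X K : Type*} [Group Γ] [MulAction Γ X]
    [MulAction Γ K] [MeasurableSpace X] [MeasurableSpace K] {ν : Measure X} [SFinite ν]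
    [NeZero ν] {μ : Measure K} [IsFiniteMeasure μ] [IsSeparable μ] [ErgodicSMul Γ K μ]
    (hν : ∀ g : Γ, Measure.QuasiMeasurePreserving (g • ·) ν ν)
    (hdbl : IsErgodicAction (ν.prod ν) (fun (g : Γ) p => g • p)) :
    IsErgodicAction (ν.prod μ) (fun (g : Γ) p => g • p) := by
  rw [isErgodicAction_smul_iff] at hdbl ⊢
  intro E hE hinv
  set s : X → Set K := fun x => Prod.mk x ⁻¹' E
  have hs : ∀ x, MeasurableSet (s x) := fun x => measurable_prodMk_left hE
  have hsmul : ∀ (g : Γ) x, s (g • x) = g • s x := preimage_prodMk_smul hinv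
  have hD : (fun p : X × X => μ (s p.1 ∆ s p.2)) =ᵐ[ν.prod ν] 0 := by
    refine (isErgodicAction_smul_iff.2 hdbl).ae_eq_zero_of_smul_invariant
      (measurable_measure_symmDiff_preimage_prodMk hE) (fun g p => ?_) (fun c hc => ?_)
    · simp only [Prod.smul_fst, Prod.smul_snd, hsmul, ← smul_set_symmDiff, measure_smul]
    · obtain ⟨A, hA, hAc⟩ := exists_measure_ne_zero_forall_measure_symmDiff_lt (μ := μ) ν hs hc
      refine fun h => mul_self_eq_zero.not.2 hA ?_
      rw [← Measure.prod_prod]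
      exact measure_mono_null (fun p hp => (hAc _ hp.1 _ hp.2).le) h
  obtain ⟨x₀, hx₀⟩ := (Measure.ae_ae_of_ae_prod hD).exists
  have hB : ∀ᵐ y ∂ν, s y =ᵐ[μ] s x₀ :=
    hx₀.mono fun y hy => (measure_symmDiff_eq_zero_iff.1 hy).symm
  have hBinv : ∀ g : Γ, g • s x₀ =ᵐ[μ] s x₀ := by
    intro g
    obtain ⟨y, hy, hgy⟩ := (hB.and ((hν g).ae hB)).exists
    rw [hsmul] at hgy
    exact ((smul_set_ae_eq g).2 hy.symm).trans hgy
  have hEB := ae_eq_univ_prod_of_ae_preimage_prodMk_ae_eq hE (hs x₀) hB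
  rcases eventuallyConst_set'.1
    (aeconst_of_forall_smul_ae_eq Γ (hs x₀).nullMeasurableSet hBinv) with h | h
  · left
    rw [measure_congr hEB, Measure.prod_prod, ae_eq_empty.1 h, mul_zero]
  · right
    rw [measure_congr hEB.compl, compl_prod_eq_union, compl_univ, empty_prod, empty_union,
      Measure.prod_prod, ae_eq_univ.1 h, mul_zero]

namespace MeasureTheory.Measure

lemma map_mulEquiv_eq_self {G : Type*} [Group G] [TopologicalSpace G]
    [IsTopologicalGroup G] [CompactSpace G] [MeasurableSpace G] [BorelSpace G] (μ : Measure G)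
    [IsProbabilityMeasure μ] [μ.IsHaarMeasure] (e : G ≃* G) (he : Continuous e) :
    μ.map e = μ := by
  have : (μ.map e).IsHaarMeasure :=
    Measure.isHaarMeasure_map_of_isFiniteMeasure μ (e : G →* G) he e.surjective
  have : IsProbabilityMeasure (μ.map e) := Measure.isProbabilityMeasure_map he.aemeasurable
  exact Measure.isHaarMeasure_eq_of_isProbabilityMeasure _ _

lemma addHaar_setOf_apply_eq_self {E : Type*} [NormedAddCommGroup E] [NormedSpace ℝ E]
    [MeasurableSpace E] [BorelSpace E] [FiniteDimensional ℝ E] (μ : Measure E)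
    [μ.IsAddHaarMeasure] {f : E →ₗ[ℝ] E} (hf : f ≠ LinearMap.id) : μ {x | f x = x} = 0 := by
  have hker : {x | f x = x} = LinearMap.ker (f - LinearMap.id) := by
    ext x
    simp [sub_eq_zero]
  rw [hker]
  refine Measure.addHaar_submodule μ _ fun h => hf ?_
  exact sub_eq_zero.1 (LinearMap.ker_eq_top.1 h)

end MeasureTheory.Measure

theorem stmt_10 (n : ℕ) {Γ K : Type*} [Group Γ] [Countable Γ]
    [CommGroup K] [TopologicalSpace K] [IsTopologicalGroup K] [CompactSpace K]
    [SecondCountableTopology K] [MeasurableSpace K] [BorelSpace K]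
    (α : Γ →* Matrix.GeneralLinearGroup (Fin n) ℝ) (hα : Function.Injective α)
    (hdbl : IsErgodicAction
      ((volume : Measure (Fin n → ℝ)).prod (volume : Measure (Fin n → ℝ)))
      (fun (g : Γ) (p : (Fin n → ℝ) × (Fin n → ℝ)) =>
        (((α g : Matrix.GeneralLinearGroup (Fin n) ℝ) : Matrix (Fin n) (Fin n) ℝ).mulVec p.1,
         ((α g : Matrix.GeneralLinearGroup (Fin n) ℝ) : Matrix (Fin n) (Fin n) ℝ).mulVec p.2)))
    (β : Γ →* (K ≃* K)) (hβcont : ∀ g : Γ, Continuous (β g))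
    (μK : Measure K) [IsProbabilityMeasure μK] [μK.IsHaarMeasure]
    (hβerg : IsErgodicAction μK (fun (g : Γ) (k : K) => β g k)) :
    IsErgodicAction ((volume : Measure (Fin n → ℝ)).prod μK)
        (fun (g : Γ) (p : (Fin n → ℝ) × K) =>
          (((α g : Matrix.GeneralLinearGroup (Fin n) ℝ) : Matrix (Fin n) (Fin n) ℝ).mulVec p.1,
           β g p.2))
      ∧ ∀ g : Γ, g ≠ 1 →
          ((volume : Measure (Fin n → ℝ)).prod μK)
            {p : (Fin n → ℝ) × K |
              ((α g : Matrix.GeneralLinearGroup (Fin n) ℝ) : Matrix (Fin n) (Fin n) ℝ).mulVec p.1 = p.1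
                ∧ β g p.2 = p.2} = 0 := by
  -- With these actions, `(α g).mulVec` and `β g` are definitionally `(g • ·)`.
  let ρ : Γ →* LinearMap.GeneralLinearGroup ℝ (Fin n → ℝ) :=
    Matrix.GeneralLinearGroup.toLin.toMonoidHom.comp α
  let _ : MulAction Γ (Fin n → ℝ) := MulAction.compHom _ ρ
  let _ : MulAction Γ K := MulAction.compHom _ β
  have : MeasurableConstSMul Γ K := ⟨fun g => (hβcont g).measurable⟩
  have : SMulInvariantMeasure Γ K μK := ⟨fun g s hs => by
    change μK (β g ⁻¹' s) = μK s
    rw [← Measure.map_apply (hβcont g).measurable hs,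
      Measure.map_mulEquiv_eq_self μK _ (hβcont g)]⟩
  have : ErgodicSMul Γ K μK := ErgodicSMul.of_isErgodicAction hβerg
  refine ⟨isErgodicAction_prod_of_doubly_ergodic (fun g => ?_) hdbl, fun g hg => ?_⟩
  · exact Measure.LinearMap.quasiMeasurePreserving volume _
      ((ρ g).isUnit.map LinearMap.det).ne_zero
  · have hfix : Matrix.toLin' (α g : Matrix (Fin n) (Fin n) ℝ) ≠ LinearMap.id := by
      rw [← Matrix.toLin'_one, Ne, Matrix.toLin'.injective.eq_iff, Units.val_eq_one, ← map_one α]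
      exact hα.ne hg
    refine measure_mono_null
      (t := {x | Matrix.toLin' (α g : Matrix (Fin n) (Fin n) ℝ) x = x} ×ˢ univ) (fun p hp => ⟨(Matrix.toLin'_apply _ _).trans hp.1, mem_univ p.2⟩) ?_
    rw [Measure.prod_prod, Measure.addHaar_setOf_apply_eq_self volume hfix, zero_mul]
end

section
/- Let n ≥ 2 and let Γ be a countable dense subgroup of SL(n,ℝ). Then the linear action of Γ on ℝⁿ is ergodic with respect to Lebesgue measure: every Lebesgue-measurable subset S ⊆ ℝⁿ with A·S = S for all A ∈ Γ is either Lebesgue-null or its complement is Lebesgue-null. -/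
/-!
Argue by contradiction with a Lebesgue density point `x ≠ 0` of `S` and a density point
`y ≠ 0` of `Sᶜ`. For `n ≥ 2`, `SL(n, ℝ)` acts transitively on nonzero vectors (a product of two
transvections suffices), so some `M` with `det M = 1` sends `x` to `y`. Elements `A ∈ Γ` close
to `M` have norm at most `‖M‖ + 1` and send `x` within `r` of `y`, hence map `closedBall x r`
into `closedBall y (K * r)` with `K` independent of `r`. Since `A` preserves both `S` and
Lebesgue measure, the density of `S` in `closedBall y (K * r)` is at least `K ^ (-n)` times its
density in `closedBall x r`, which tends to `1`; so the density of `S` at `y` cannot tend to `0`.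
-/

open MeasureTheory Measure Filter Metric Module Matrix
open scoped Topology

section Transitivity

variable {K V : Type*} [Field K] [AddCommGroup V] [Module K V] [FiniteDimensional K V]

lemma LinearMap.exists_det_eq_one_apply_eq_of_dual_eq_one {f : Dual K V} {x y : V} (hx : f x = 1)
    (hy : f y = 1) : ∃ g : V →ₗ[K] V, g.det = 1 ∧ g x = y :=
  ⟨transvection f (y - x), by simp [hx, hy], by simp [transvection.apply, hx]⟩

lemma LinearMap.exists_det_eq_one_apply_eq [Infinite K] (hV : 2 ≤ finrank K V) {x y : V}
    (hx : x ≠ 0) (hy : y ≠ 0) : ∃ g : V →ₗ[K] V, g.det = 1 ∧ g x = y := by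
  have hline (v : V) : K ∙ v ≠ ⊤ := fun h => by
    have := finrank_span_le_card (R := K) ({v} : Set V)
    rw [h, finrank_top, Set.toFinset_singleton, Finset.card_singleton] at this
    omega
  -- go from `x` to `y` through a vector `z` on neither of the lines `K ∙ x`, `K ∙ y`
  obtain ⟨z, hz⟩ := Submodule.exists_forall_notMem_of_forall_ne_top ![K ∙ x, K ∙ y]
    (Fin.forall_fin_two.2 ⟨hline x, hline y⟩)
  have hdual {v : V} (hv : v ≠ 0) (hzv : z ∉ K ∙ v) : ∃ f : Dual K V, f v = 1 ∧ f z = 1 := by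
    have hli : LinearIndependent K ![z, v] :=
      linearIndependent_fin2.2 ⟨hv, fun a h => hzv (Submodule.mem_span_singleton.2 ⟨a, h⟩)⟩
    obtain ⟨f, hf⟩ := exists_dual_forall_apply_eq_one (linearIndepOn_univ_iff.2 hli)
    exact ⟨f, hf 1 trivial, hf 0 trivial⟩
  obtain ⟨f, hfx, hfz⟩ := hdual hx (hz 0)
  obtain ⟨f', hf'y, hf'z⟩ := hdual hy (hz 1)
  obtain ⟨g, hg, rfl⟩ := exists_det_eq_one_apply_eq_of_dual_eq_one hfx hfz
  obtain ⟨g', hg', rfl⟩ := exists_det_eq_one_apply_eq_of_dual_eq_one hf'z hf'y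
  exact ⟨g' ∘ₗ g, by rw [det_comp, hg, hg', one_mul], rfl⟩

end Transitivity

lemma Matrix.exists_det_eq_one_mulVec_eq {K ι : Type*} [Field K] [Infinite K] [Fintype ι]
    [DecidableEq ι] (hι : 2 ≤ Fintype.card ι) {x y : ι → K} (hx : x ≠ 0) (hy : y ≠ 0) :
    ∃ M : Matrix ι ι K, M.det = 1 ∧ M *ᵥ x = y := by
  obtain ⟨g, hg, hgx⟩ := LinearMap.exists_det_eq_one_apply_eq (K := K) (by simpa using hι) hx hy
  exact ⟨LinearMap.toMatrix' g, by rw [LinearMap.det_toMatrix', hg], by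
    rw [LinearMap.toMatrix'_mulVec, hgx]⟩

section Density

variable {E : Type*} [NormedAddCommGroup E] [NormedSpace ℝ E] [FiniteDimensional ℝ E]
  [MeasurableSpace E] [BorelSpace E] (μ : Measure E) [IsAddHaarMeasure μ]

theorem not_tendsto_measure_inter_div_zero_of_le_scaled {S : Set E} {x y : E} {K : ℝ}
    (hK : 0 < K)
    (hx : Tendsto (fun r => μ (S ∩ closedBall x r) / μ (closedBall x r)) (𝓝[>] 0) (𝓝 1))
    (hle : ∀ r > 0, μ (S ∩ closedBall x r) ≤ μ (S ∩ closedBall y (K * r))) :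
    ¬ Tendsto (fun r => μ (S ∩ closedBall y r) / μ (closedBall y r)) (𝓝[>] 0) (𝓝 0) := by
  intro hy
  set c := ENNReal.ofReal (K ^ finrank ℝ E)
  have hc : c ≠ 0 := by simp [c, hK]
  have hscaled : Tendsto (K * ·) (𝓝[>] (0 : ℝ)) (𝓝[>] 0) :=
    tendsto_iff_comap.2 (comap_mulLeft_nhdsGT_zero hK).ge
  have hratio : ∀ᶠ r in 𝓝[>] (0 : ℝ), μ (S ∩ closedBall x r) / μ (closedBall x r) / c ≤
      μ (S ∩ closedBall y (K * r)) / μ (closedBall y (K * r)) := by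
    filter_upwards [self_mem_nhdsWithin] with r (hr : 0 < r)
    rw [addHaar_closedBall_mul μ y hK.le hr.le, ← addHaar_closedBall_center μ x,
      ENNReal.div_eq_inv_mul, ENNReal.div_eq_inv_mul, ENNReal.div_eq_inv_mul,
      ENNReal.mul_inv (Or.inl hc) (Or.inl ENNReal.ofReal_ne_top), mul_assoc]
    gcongr c⁻¹ * (_ * ?_)
    exact hle r hr
  have := le_of_tendsto_of_tendsto (ENNReal.Tendsto.div_const hx (Or.inl one_ne_zero))
    (hy.comp hscaled) hratio
  simp [c] at this

theorem exists_mem_ne_zero_tendsto_measure_inter_div [Nontrivial E] {S T : Set E}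
    (hS : MeasurableSet S) (hT : μ T ≠ 0) : ∃ x ∈ T, x ≠ 0 ∧
      Tendsto (fun r => μ (S ∩ closedBall x r) / μ (closedBall x r)) (𝓝[>] 0)
        (𝓝 (S.indicator 1 x)) := by
  obtain ⟨x, hxT, hx, hne⟩ := exists_mem_of_measure_ne_zero_of_ae hT <| ae_restrict_of_ae <|
    (Besicovitch.ae_tendsto_measure_inter_div_of_measurableSet μ hS).and
      (compl_mem_ae_iff.2 (measure_singleton 0))
  exact ⟨x, hxT, hne, hx⟩

end Density

section LinftyOpNorm

attribute [local instance] Matrix.linftyOpNormedAddCommGroup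

lemma Matrix.mulVec_image_closedBall_subset {m n : Type*} [Fintype m] [Fintype n]
    (A : Matrix m n ℝ) (x : n → ℝ) (r : ℝ) :
    (A *ᵥ ·) '' closedBall x r ⊆ closedBall (A *ᵥ x) (‖A‖ * r) := by
  rintro _ ⟨v, hv, rfl⟩
  rw [mem_closedBall, dist_eq_norm, ← mulVec_sub]
  exact (linfty_opNorm_mulVec A _).trans (by gcongr; exact mem_closedBall_iff_norm.1 hv)

lemma exists_measure_inter_closedBall_le_of_mem_closure {ι : Type*} [Fintype ι] [DecidableEq ι]
    (μ : Measure (ι → ℝ)) [IsAddHaarMeasure μ] {G : Set (Matrix ι ι ℝ)} {S : Set (ι → ℝ)}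
    (hG : ∀ A ∈ G, |A.det| = 1 ∧ (A *ᵥ ·) '' S ⊆ S) {M : Matrix ι ι ℝ} (hM : M ∈ closure G)
    (x : ι → ℝ) :
    ∃ K > 0, ∀ r > 0, μ (S ∩ closedBall x r) ≤ μ (S ∩ closedBall (M *ᵥ x) (K * r)) := by
  refine ⟨‖M‖ + 2, by positivity, fun r hr => ?_⟩
  have hU : IsOpen {A : Matrix ι ι ℝ | ‖A‖ < ‖M‖ + 1 ∧ dist (A *ᵥ x) (M *ᵥ x) < r} :=
    (isOpen_lt continuous_norm continuous_const).inter
      (isOpen_lt ((continuous_id.matrix_mulVec continuous_const).dist continuous_const)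
        continuous_const)
  obtain ⟨A, ⟨hAnorm, hAx⟩, hAG⟩ :=
    mem_closure_iff.1 hM _ hU ⟨by simp, by simpa using hr⟩
  obtain ⟨hdet, hS⟩ := hG A hAG
  have hball : (A *ᵥ ·) '' closedBall x r ⊆ closedBall (M *ᵥ x) ((‖M‖ + 2) * r) := by
    refine (A.mulVec_image_closedBall_subset x r).trans (closedBall_subset_closedBall' ?_)
    nlinarith [norm_nonneg A]
  calc μ (S ∩ closedBall x r) = μ ((A *ᵥ ·) '' (S ∩ closedBall x r)) := by
        rw [show (A *ᵥ ·) = toLin' A from rfl, addHaar_image_linearMap, LinearMap.det_toLin',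
          hdet, ENNReal.ofReal_one, one_mul]
    _ ≤ μ (S ∩ closedBall (M *ᵥ x) ((‖M‖ + 2) * r)) :=
        measure_mono <| (Set.image_inter_subset _ _ _).trans
          (Set.inter_subset_inter hS hball)

end LinftyOpNorm

theorem stmt_12_general (n : ℕ) (hn : 2 ≤ n) (Γ : Subgroup (Matrix.SpecialLinearGroup (Fin n) ℝ))
    (hdense : ∀ M : Matrix (Fin n) (Fin n) ℝ, M.det = 1 →
      M ∈ closure ((fun A : Matrix.SpecialLinearGroup (Fin n) ℝ =>
        (A : Matrix (Fin n) (Fin n) ℝ)) '' (Γ : Set (Matrix.SpecialLinearGroup (Fin n) ℝ)))) :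
    ∀ S : Set (Fin n → ℝ), MeasurableSet S →
      (∀ A : Matrix.SpecialLinearGroup (Fin n) ℝ, A ∈ Γ →
        (fun x : Fin n → ℝ => (A : Matrix (Fin n) (Fin n) ℝ).mulVec x) '' S = S) →
      volume S = 0 ∨ volume Sᶜ = 0 := by
  intro S hS hinv
  have : NeZero n := ⟨by omega⟩
  by_contra! hS0
  obtain ⟨x, hxS, hx0, hx⟩ := exists_mem_ne_zero_tendsto_measure_inter_div volume hS hS0.1
  obtain ⟨y, hyS, hy0, hy⟩ := exists_mem_ne_zero_tendsto_measure_inter_div volume hS hS0.2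
  rw [Set.indicator_of_mem hxS, Pi.one_apply] at hx
  rw [Set.indicator_of_notMem hyS] at hy
  obtain ⟨M, hMdet, rfl⟩ := Matrix.exists_det_eq_one_mulVec_eq (by simpa using hn) hx0 hy0
  have hΓ : ∀ A ∈ (↑) '' (Γ : Set (Matrix.SpecialLinearGroup (Fin n) ℝ)),
      |A.det| = 1 ∧ (A *ᵥ ·) '' S ⊆ S := by
    rintro _ ⟨B, hB, rfl⟩
    exact ⟨by simp, (hinv B hB).subset⟩
  obtain ⟨K, hK, hle⟩ :=
    exists_measure_inter_closedBall_le_of_mem_closure volume hΓ (hdense M hMdet) x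
  exact not_tendsto_measure_inter_div_zero_of_le_scaled volume hK hx hle hy

theorem stmt_12 (n : ℕ) (hn : 2 ≤ n) (Γ : Subgroup (Matrix.SpecialLinearGroup (Fin n) ℝ))
    [Countable Γ]
    (hdense : ∀ M : Matrix (Fin n) (Fin n) ℝ, M.det = 1 →
      M ∈ closure ((fun A : Matrix.SpecialLinearGroup (Fin n) ℝ =>
        (A : Matrix (Fin n) (Fin n) ℝ)) '' (Γ : Set (Matrix.SpecialLinearGroup (Fin n) ℝ)))) :
    ∀ S : Set (Fin n → ℝ), MeasurableSet S →
      (∀ A : Matrix.SpecialLinearGroup (Fin n) ℝ, A ∈ Γ →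
        (fun x : Fin n → ℝ => (A : Matrix (Fin n) (Fin n) ℝ).mulVec x) '' S = S) →
      volume S = 0 ∨ volume Sᶜ = 0 :=
  stmt_12_general n hn Γ hdense
end
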